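/- arXiv:1501.06191 — 3 statements merged into one kernel-verified Lean document; each statement's English description precedes it below -/
import Mathlib

section
/- Let d ≥ 1 and let v, w : ℝ^d → [0,∞) be measurable functions such that w is v-moderate, i.e. w(x+y) ≤ v(x)·w(y) for all x, y ∈ ℝ^d. Then for every r, p, q ∈ [1,∞] satisfying 1/r + 1 = 1/p + 1/q and all measurable functions f, g : ℝ^d → ℝ, one has ‖(|f| ⋆ |g|)·w‖_{L^r(ℝ^d)} ≤ ‖f·v‖_{L^p(ℝ^d)} · ‖g·w‖_{L^q(ℝ^d)}, where (|f| ⋆ |g|)(x) = ∫_{ℝ^d} |f(y)| |g(x−y)| dy denotes the convolution (all norms are with respect to Lebesgue measure and may be infinite). -/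
open MeasureTheory
open scoped ENNReal

/-!
Since `w x = w (y + (x - y)) ≤ v y * w (x - y)`, the weighted convolution `(|f| ⋆ |g|) w` is
bounded pointwise by the unweighted convolution `|f v| ⋆ |g w|`, so the theorem reduces to the
classical Young inequality on a Haar-measured abelian group. For `r = ∞` that inequality is
Hölder's inequality at each point. For `r < ∞` one writes `a = F y`, `b = G (x - y)` and splits
`a * b = (a ^ p * b ^ q) ^ (1/r) * (a ^ p) ^ (1/p - 1/r) * (b ^ q) ^ (1/q - 1/r)`,
applies Hölder's inequality for three functions with these exponents (they sum to `1`), and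
integrates in `x`, using Fubini in the form `∫ (F ^ p ⋆ G ^ q) = (∫ F ^ p) * (∫ G ^ q)`.
-/

namespace ENNReal

theorem mul_eq_rpow_mul_rpow_mul_rpow (a b : ℝ≥0∞) {p q c : ℝ} (hp : 0 < p) (hq : 0 < q)
    (hc : 0 ≤ c) (hcp : c ≤ 1 / p) (hcq : c ≤ 1 / q) :
    a * b = (a ^ p * b ^ q) ^ c * (a ^ p) ^ (1 / p - c) * (b ^ q) ^ (1 / q - c) := by
  have hp' : 0 ≤ p * (1 / p - c) := mul_nonneg hp.le (sub_nonneg.2 hcp)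
  have hq' : 0 ≤ q * (1 / q - c) := mul_nonneg hq.le (sub_nonneg.2 hcq)
  calc a * b = a ^ (p * c + p * (1 / p - c)) * b ^ (q * c + q * (1 / q - c)) := by
        field_simp; simp
    _ = _ := by
        rw [rpow_add_of_nonneg _ _ (by positivity) hp', rpow_add_of_nonneg _ _ (by positivity) hq',
          mul_rpow_of_nonneg _ _ hc, ← rpow_mul, ← rpow_mul, ← rpow_mul, ← rpow_mul]
        ring

theorem lintegral_mul_mul_rpow_le {α : Type*} [MeasurableSpace α] {μ : Measure α}
    {f g h : α → ℝ≥0∞} (hf : AEMeasurable f μ) (hg : AEMeasurable g μ) (hh : AEMeasurable h μ)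
    {a b c : ℝ} (ha : 0 ≤ a) (hb : 0 ≤ b) (hc : 0 ≤ c) (habc : a + b + c = 1) :
    ∫⁻ x, f x ^ a * g x ^ b * h x ^ c ∂μ ≤
      (∫⁻ x, f x ∂μ) ^ a * (∫⁻ x, g x ∂μ) ^ b * (∫⁻ x, h x ∂μ) ^ c := by
  simpa [Fin.prod_univ_three] using lintegral_prod_norm_pow_le (μ := μ) Finset.univ
    (f := ![f, g, h]) (p := ![a, b, c]) (by simp [Fin.forall_fin_succ, hf, hg, hh])
    (by simp [Fin.sum_univ_three, habc]) (by simp [Fin.forall_fin_succ, ha, hb, hc])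


theorem ne_top_of_one_div_add_one_eq {p q r : ℝ≥0∞} (hq : 1 ≤ q) (hr : r ≠ ∞)
    (h : 1 / r + 1 = 1 / p + 1 / q) : p ≠ ∞ := by
  rintro rfl
  have : 1 / r + 1 ≤ 0 + 1 := by
    rw [h, div_top, zero_add, zero_add]
    exact ENNReal.div_le_of_le_mul (by simpa using hq)
  simpa [hr] using (ENNReal.add_le_add_iff_right one_ne_top).1 this

theorem ne_zero_of_one_div_add_one_eq {p q r : ℝ≥0∞} (hp : 1 ≤ p) (hq : 1 ≤ q)
    (h : 1 / r + 1 = 1 / p + 1 / q) : r ≠ 0 := by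
  rintro rfl
  have hp' : 1 / p ≠ ∞ := by simpa using (zero_lt_one.trans_le hp).ne'
  have hq' : 1 / q ≠ ∞ := by simpa using (zero_lt_one.trans_le hq).ne'
  rw [ENNReal.div_zero one_ne_zero, top_add] at h
  exact add_ne_top.2 ⟨hp', hq'⟩ h.symm

theorem toReal_one_div_add_one_eq {p q r : ℝ≥0∞} (hp : 1 ≤ p) (hq : 1 ≤ q)
    (h : 1 / r + 1 = 1 / p + 1 / q) :
    1 / r.toReal + 1 = 1 / p.toReal + 1 / q.toReal := by
  have hp' : 1 / p ≠ ∞ := by simpa using (zero_lt_one.trans_le hp).ne'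
  have hq' : 1 / q ≠ ∞ := by simpa using (zero_lt_one.trans_le hq).ne'
  have hr' : 1 / r ≠ ∞ := by simpa using ne_zero_of_one_div_add_one_eq hp hq h
  have := congrArg ENNReal.toReal h
  rw [toReal_add hr' one_ne_top, toReal_add hp' hq'] at this
  simpa using this

end ENNReal

namespace MeasureTheory

theorem lintegral_lconvolution {G : Type*} [AddGroup G] [MeasurableSpace G] [MeasurableAdd₂ G]
    [MeasurableNeg G] {μ : Measure G} [SFinite μ] [μ.IsAddLeftInvariant] {f g : G → ℝ≥0∞}
    (hf : AEMeasurable f μ) (hg : AEMeasurable g μ) :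
    ∫⁻ x, (f ⋆ₗ[μ] g) x ∂μ = (∫⁻ x, f x ∂μ) * ∫⁻ x, g x ∂μ := by
  simp only [lconvolution_def]
  rw [lintegral_lintegral_swap (by fun_prop)]
  have inner (y : G) : ∫⁻ x, f y * g (-y + x) ∂μ = f y * ∫⁻ x, g x ∂μ := by
    rw [← lintegral_add_left_eq_self g (-y)]
    exact lintegral_const_mul'' _
      (hg.comp_quasiMeasurePreserving (measurePreserving_add_left μ (-y)).quasiMeasurePreserving)
  simp_rw [inner, lintegral_mul_const'' _ hf]

theorem lconvolution_mul_le_of_moderate {G : Type*} [AddGroup G] [MeasurableSpace G]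
    {μ : Measure G} {f g v w : G → ℝ≥0∞} (hmod : ∀ x y, w (x + y) ≤ v x * w y) (x : G) :
    (f ⋆ₗ[μ] g) x * w x ≤ ((fun y => f y * v y) ⋆ₗ[μ] (fun y => g y * w y)) x := by
  refine (lintegral_mul_const_le _ _).trans (lintegral_mono fun y => ?_)
  calc f y * g (-y + x) * w x ≤ f y * g (-y + x) * (v y * w (-y + x)) := by
        gcongr; simpa using hmod y (-y + x)
    _ = f y * v y * (g (-y + x) * w (-y + x)) := by ring

variable {E F : Type*} [NormedAddCommGroup E] [NormedAddCommGroup F]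

section Pointwise

variable {G : Type*} [AddCommGroup G] [MeasurableSpace G] [MeasurableAdd G] [MeasurableNeg G]
  {μ : Measure G} [μ.IsAddLeftInvariant] [μ.IsNegInvariant]

theorem measurePreserving_neg_add (x : G) : MeasurePreserving (fun y => -y + x) μ μ := by
  simpa only [neg_add_eq_sub] using Measure.measurePreserving_sub_left μ x

theorem lconvolution_le_rpow_mul_rpow_mul_rpow {f g : G → ℝ≥0∞} (hf : AEMeasurable f μ)
    (hg : AEMeasurable g μ) {p q c : ℝ} (hp : 1 ≤ p) (hq : 1 ≤ q) (hc : 0 ≤ c)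
    (hpqc : c + 1 = 1 / p + 1 / q) (x : G) :
    (f ⋆ₗ[μ] g) x ≤ ((fun y => f y ^ p) ⋆ₗ[μ] (fun y => g y ^ q)) x ^ c *
      (∫⁻ y, f y ^ p ∂μ) ^ (1 / p - c) * (∫⁻ y, g y ^ q ∂μ) ^ (1 / q - c) := by
  have hp1 : 1 / p ≤ 1 := (div_le_one (by linarith)).2 hp
  have hq1 : 1 / q ≤ 1 := (div_le_one (by linarith)).2 hq
  have hgx : AEMeasurable (fun y => g (-y + x)) μ :=
    hg.comp_quasiMeasurePreserving (measurePreserving_neg_add x).quasiMeasurePreserving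
  simp only [lconvolution_def]
  calc ∫⁻ y, f y * g (-y + x) ∂μ
      = ∫⁻ y, (f y ^ p * g (-y + x) ^ q) ^ c * (f y ^ p) ^ (1 / p - c) *
          (g (-y + x) ^ q) ^ (1 / q - c) ∂μ :=
        lintegral_congr fun y => ENNReal.mul_eq_rpow_mul_rpow_mul_rpow _ _ (by linarith)
          (by linarith) hc (by linarith) (by linarith)
    _ ≤ (∫⁻ y, f y ^ p * g (-y + x) ^ q ∂μ) ^ c * (∫⁻ y, f y ^ p ∂μ) ^ (1 / p - c) *
          (∫⁻ y, g (-y + x) ^ q ∂μ) ^ (1 / q - c) :=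
        ENNReal.lintegral_mul_mul_rpow_le ((hf.pow_const p).mul (hgx.pow_const q))
          (hf.pow_const p) (hgx.pow_const q) hc
          (by linarith) (by linarith) (by linarith)
    _ = _ := by
        simp only [neg_add_eq_sub, lintegral_sub_left_eq_self (fun z => g z ^ q)]

theorem lconvolution_enorm_le_eLpNorm_mul_eLpNorm {f : G → E} {g : G → F}
    (hf : AEStronglyMeasurable f μ) (hg : AEStronglyMeasurable g μ) {p q : ℝ≥0∞}
    [p.HolderConjugate q] (x : G) :
    ((‖f ·‖ₑ) ⋆ₗ[μ] (‖g ·‖ₑ)) x ≤ eLpNorm f p μ * eLpNorm g q μ := by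
  have hgx : AEStronglyMeasurable (fun y => g (-y + x)) μ :=
    hg.comp_measurePreserving (measurePreserving_neg_add x)
  calc ((‖f ·‖ₑ) ⋆ₗ[μ] (‖g ·‖ₑ)) x = eLpNorm (fun y => ‖f y‖ * ‖g (-y + x)‖) 1 μ := by
        simp [lconvolution_def, eLpNorm_one_eq_lintegral_enorm, enorm_mul]
    _ ≤ 1 * eLpNorm f p μ * eLpNorm (fun y => g (-y + x)) q μ :=
        eLpNorm_le_eLpNorm_mul_eLpNorm_of_nnnorm hf hgx (fun a b => ‖a‖ * ‖b‖) 1 (by simp)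
    _ = eLpNorm f p μ * eLpNorm g q μ := by
        rw [one_mul, ← Function.comp_def g,
          eLpNorm_comp_measurePreserving hg (measurePreserving_neg_add x)]

end Pointwise

section Young

variable {G : Type*} [AddCommGroup G] [MeasurableSpace G] [MeasurableAdd₂ G] [MeasurableNeg G]
  {μ : Measure G} [SFinite μ] [μ.IsAddLeftInvariant] [μ.IsNegInvariant]

theorem lintegral_lconvolution_rpow_le {f g : G → ℝ≥0∞} (hf : AEMeasurable f μ)
    (hg : AEMeasurable g μ) {p q r : ℝ} (hp : 1 ≤ p) (hq : 1 ≤ q) (hr : 0 < r)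
    (hpqr : 1 / r + 1 = 1 / p + 1 / q) :
    ∫⁻ x, (f ⋆ₗ[μ] g) x ^ r ∂μ ≤ (∫⁻ y, f y ^ p ∂μ) * (∫⁻ y, g y ^ q ∂μ) *
      ((∫⁻ y, f y ^ p ∂μ) ^ (1 / p - 1 / r) * (∫⁻ y, g y ^ q ∂μ) ^ (1 / q - 1 / r)) ^ r := by
  set C := (∫⁻ y, f y ^ p ∂μ) ^ (1 / p - 1 / r) * (∫⁻ y, g y ^ q ∂μ) ^ (1 / q - 1 / r)
  have pointwise (x : G) : (f ⋆ₗ[μ] g) x ^ r ≤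
      ((fun y => f y ^ p) ⋆ₗ[μ] (fun y => g y ^ q)) x * C ^ r := by
    calc (f ⋆ₗ[μ] g) x ^ r
        ≤ (((fun y => f y ^ p) ⋆ₗ[μ] (fun y => g y ^ q)) x ^ (1 / r) * C) ^ r := by
          rw [← mul_assoc]
          gcongr
          exact lconvolution_le_rpow_mul_rpow_mul_rpow hf hg hp hq (by positivity) hpqr x
      _ = _ := by
          rw [ENNReal.mul_rpow_of_nonneg _ _ hr.le, ← ENNReal.rpow_mul, one_div_mul_cancel hr.ne',
            ENNReal.rpow_one]
  calc ∫⁻ x, (f ⋆ₗ[μ] g) x ^ r ∂μ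
      ≤ ∫⁻ x, ((fun y => f y ^ p) ⋆ₗ[μ] (fun y => g y ^ q)) x * C ^ r ∂μ :=
        lintegral_mono pointwise
    _ = _ := by
        rw [lintegral_mul_const'' _ (aemeasurable_lconvolution (hf.pow_const p) (hg.pow_const q)),
          lintegral_lconvolution (hf.pow_const p) (hg.pow_const q)]

theorem eLpNorm'_lconvolution_le {f g : G → ℝ≥0∞} (hf : AEMeasurable f μ) (hg : AEMeasurable g μ)
    {p q r : ℝ} (hp : 1 ≤ p) (hq : 1 ≤ q) (hr : 0 < r) (hpqr : 1 / r + 1 = 1 / p + 1 / q) :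
    eLpNorm' (f ⋆ₗ[μ] g) r μ ≤ eLpNorm' f p μ * eLpNorm' g q μ := by
  set A := ∫⁻ y, f y ^ p ∂μ
  set B := ∫⁻ y, g y ^ q ∂μ
  have hr' : 0 ≤ 1 / r := by positivity
  have hpr : 0 ≤ 1 / p - 1 / r := by
    have : 1 / q ≤ 1 := (div_le_one (by linarith)).2 hq
    linarith
  have hqr : 0 ≤ 1 / q - 1 / r := by
    have : 1 / p ≤ 1 := (div_le_one (by linarith)).2 hp
    linarith
  simp only [eLpNorm', enorm_eq_self]
  calc (∫⁻ x, (f ⋆ₗ[μ] g) x ^ r ∂μ) ^ (1 / r)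
      ≤ (A * B * (A ^ (1 / p - 1 / r) * B ^ (1 / q - 1 / r)) ^ r) ^ (1 / r) := by
        gcongr
        exact lintegral_lconvolution_rpow_le hf hg hp hq hr hpqr
    _ = A ^ (1 / r) * A ^ (1 / p - 1 / r) * (B ^ (1 / r) * B ^ (1 / q - 1 / r)) := by
        rw [ENNReal.mul_rpow_of_nonneg _ _ hr', ENNReal.mul_rpow_of_nonneg _ _ hr',
          ← ENNReal.rpow_mul, mul_one_div_cancel hr.ne', ENNReal.rpow_one]
        ring
    _ = A ^ (1 / p) * B ^ (1 / q) := by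
        rw [← ENNReal.rpow_add_of_nonneg _ _ hr' hpr, ← ENNReal.rpow_add_of_nonneg _ _ hr' hqr,
          add_sub_cancel, add_sub_cancel]

theorem eLpNorm_lconvolution_le {f : G → E} {g : G → F}
    (hf : AEStronglyMeasurable f μ) (hg : AEStronglyMeasurable g μ) {p q r : ℝ≥0∞}
    (hp : 1 ≤ p) (hq : 1 ≤ q) (hpqr : 1 / r + 1 = 1 / p + 1 / q) :
    eLpNorm ((‖f ·‖ₑ) ⋆ₗ[μ] (‖g ·‖ₑ)) r μ ≤ eLpNorm f p μ * eLpNorm g q μ := by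
  rcases eq_or_ne r ∞ with rfl | hr
  · have : p.HolderConjugate q := ENNReal.holderConjugate_iff.2 (by simpa using hpqr.symm)
    rw [eLpNorm_exponent_top]
    exact eLpNormEssSup_le_of_ae_enorm_bound
      (ae_of_all _ fun x => lconvolution_enorm_le_eLpNorm_mul_eLpNorm hf hg x)
  have hp_top := ENNReal.ne_top_of_one_div_add_one_eq hq hr hpqr
  have hq_top := ENNReal.ne_top_of_one_div_add_one_eq hp hr (hpqr.trans (add_comm _ _))
  have hr0 := ENNReal.ne_zero_of_one_div_add_one_eq hp hq hpqr
  rw [eLpNorm_eq_eLpNorm' hr0 hr, eLpNorm_eq_eLpNorm' (by positivity) hp_top,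
    eLpNorm_eq_eLpNorm' (by positivity) hq_top, ← eLpNorm'_enorm (f := f),
    ← eLpNorm'_enorm (f := g)]
  exact eLpNorm'_lconvolution_le hf.enorm hg.enorm (by simpa using ENNReal.toReal_mono hp_top hp)
    (by simpa using ENNReal.toReal_mono hq_top hq) (ENNReal.toReal_pos hr0 hr)
    (ENNReal.toReal_one_div_add_one_eq hp hq hpqr)

end Young

end MeasureTheory

theorem weighted_young_inequality_general
    (d : ℕ)
    (v w : EuclideanSpace ℝ (Fin d) → ℝ)
    (hv : Measurable v) (hw : Measurable w)
    (hw0 : ∀ x, 0 ≤ w x)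
    (hmod : ∀ x y, w (x + y) ≤ v x * w y)
    (r p q : ℝ≥0∞) (hp : 1 ≤ p) (hq : 1 ≤ q)
    (hrpq : 1 / r + 1 = 1 / p + 1 / q)
    (f g : EuclideanSpace ℝ (Fin d) → ℝ)
    (hf : Measurable f) (hg : Measurable g) :
    eLpNorm (fun x => (∫ y, |f y| * |g (x - y)|) * w x) r volume ≤
      eLpNorm (fun x => f x * v x) p volume * eLpNorm (fun x => g x * w x) q volume := by
  have hmod' (x y) : ‖w (x + y)‖ₑ ≤ ‖v x‖ₑ * ‖w y‖ₑ := by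
    rw [← enorm_mul, enorm_le_iff_norm_le, Real.norm_of_nonneg (hw0 _)]
    exact (hmod x y).trans (Real.le_norm_self _)
  calc eLpNorm (fun x => (∫ y, |f y| * |g (x - y)|) * w x) r volume
      ≤ eLpNorm (fun x => ((‖f ·‖ₑ) ⋆ₗ (‖g ·‖ₑ)) x * ‖w x‖ₑ) r volume := by
        refine eLpNorm_mono_enorm fun x => ?_
        rw [enorm_mul, enorm_eq_self]
        gcongr
        refine (enorm_integral_le_lintegral_enorm _).trans_eq ?_
        simp [lconvolution_def, enorm_mul, neg_add_eq_sub]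
    _ ≤ eLpNorm ((fun x => ‖f x * v x‖ₑ) ⋆ₗ (fun x => ‖g x * w x‖ₑ)) r volume :=
        eLpNorm_mono_enorm fun x => by
          simpa only [enorm_mul, enorm_eq_self] using lconvolution_mul_le_of_moderate hmod' x
    _ ≤ _ := eLpNorm_lconvolution_le (hf.mul hv).aestronglyMeasurable
        (hg.mul hw).aestronglyMeasurable hp hq hrpq

/-- **Weighted Young inequality.** If `w` is `v`-moderate, then for exponents with
`1/r + 1 = 1/p + 1/q` one has `‖(|f| ⋆ |g|) w‖_{L^r} ≤ ‖f v‖_{L^p} ‖g w‖_{L^q}`. -/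
theorem weighted_young_inequality
    (d : ℕ) (hd : 1 ≤ d)
    (v w : EuclideanSpace ℝ (Fin d) → ℝ)
    (hv : Measurable v) (hw : Measurable w)
    (hv0 : ∀ x, 0 ≤ v x) (hw0 : ∀ x, 0 ≤ w x)
    (hmod : ∀ x y, w (x + y) ≤ v x * w y)
    (r p q : ℝ≥0∞) (hr : 1 ≤ r) (hp : 1 ≤ p) (hq : 1 ≤ q)
    (hrpq : 1 / r + 1 = 1 / p + 1 / q)
    (f g : EuclideanSpace ℝ (Fin d) → ℝ)
    (hf : Measurable f) (hg : Measurable g) :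
    eLpNorm (fun x => (∫ y, |f y| * |g (x - y)|) * w x) r volume ≤
      eLpNorm (fun x => f x * v x) p volume * eLpNorm (fun x => g x * w x) q volume :=
  weighted_young_inequality_general d v w hv hw hw0 hmod r p q hp hq hrpq f g hf hg
end

section
/- (Bounds on the heat-kernel covariance.) For M ∈ [1,∞), t₁, t₂ ≥ 0 and x ∈ ℝ², define 𝒦_M(t₁,t₂;x) = (1/(8π)) ∫_{|t₁−t₂|}^{t₁+t₂} ℓ^{−1} Σ_{y ∈ Mℤ²} exp(−|x−y|²/(4ℓ)) dℓ, and let |x|_M = inf{|x+y| : y ∈ Mℤ²}. Then: (i) for every T > 0 there exists C(T) < ∞ such that uniformly over x ∈ ℝ², 0 ≤ t₁, t₂ ≤ T and M ∈ [1,∞), 𝒦_M(t₁,t₂;x) ≤ C(T)·(1 + log₊(|x|_M^{−1})); (ii) for every T > 0 and every λ ∈ (0,1] there exists C(T,λ) < ∞ such that uniformly over x ∈ ℝ², 0 ≤ t₁, t₂ ≤ T and M ∈ [1,∞), |𝒦_M(t₁,t₁;x) − 𝒦_M(t₁,t₂;x)| ≤ C(T,λ)·|t₁−t₂|^λ / |x|_M^{2λ}.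 Here log₊(u) = max(log u, 0). -/
/-!
Translating `x` by a lattice vector changes neither `𝒦_M` nor `|x|_M`, so we may take `x` in the
cell `|xᵢ| ≤ M/2`. There `|x - Mm| ≥ |x|_M` and `|x - Mm| ≥ |m|/2`, so for `0 < ℓ ≤ 2T` the theta
sum in the integrand is at most `θ_T e^{-|x|_M²/(8ℓ)}`, where `θ_T` is the unit-lattice theta sum
at the origin and depends on neither `M` nor `x`. With `α = |x|_M²/8` the integrand is therefore
dominated by `θ_T ℓ⁻¹ e^{-α/ℓ}`. Part (i) follows from `∫₀^b ℓ⁻¹ e^{-α/ℓ} dℓ ≤ 1 + log₊(b/α)`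
(bound the integrand by `α⁻¹` below `α` and by `ℓ⁻¹` above). For part (ii),
`𝒦_M(t₁,t₁) - 𝒦_M(t₁,t₂)` is `(8π)⁻¹` times a difference of integrals over two intervals of
length `|t₁ - t₂|`, and `ℓ⁻¹ e^{-α/ℓ} ≤ α^{-λ} ℓ^{λ-1}` integrates over such an interval to at
most `α^{-λ} |t₁ - t₂|^λ / λ`.
-/

open MeasureTheory
open scoped ENNReal

noncomputable section

/-- A point of the lattice `Mℤ²`. -/
def latticePt (M : ℝ) (m : Fin 2 → ℤ) : EuclideanSpace ℝ (Fin 2) :=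
  (WithLp.equiv 2 (Fin 2 → ℝ)).symm fun i => M * (m i : ℝ)

/-- The lattice `Mℤ² ⊆ ℝ²`. -/
def lattice (M : ℝ) : Set (EuclideanSpace ℝ (Fin 2)) := Set.range (latticePt M)

/-- `|x|_M = inf {|x + y| : y ∈ Mℤ²}`, the distance from `x` to the lattice. -/
def latticeDist (M : ℝ) (x : EuclideanSpace ℝ (Fin 2)) : ℝ :=
  Metric.infDist x (lattice M)

/-- The periodised heat-kernel covariance
`𝒦_M(t₁,t₂;x) = (8π)⁻¹ ∫_{|t₁-t₂|}^{t₁+t₂} ℓ⁻¹ Σ_{y ∈ Mℤ²} exp(-|x-y|²/(4ℓ)) dℓ`. -/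
def covKernel (M : ℝ) (t₁ t₂ : ℝ) (x : EuclideanSpace ℝ (Fin 2)) : ℝ :=
  (8 * Real.pi)⁻¹ *
    ∫ l in |t₁ - t₂|..(t₁ + t₂),
      l⁻¹ * ∑' m : Fin 2 → ℤ, Real.exp (-‖x - latticePt M m‖ ^ 2 / (4 * l))

/-- `log₊(u⁻¹)` as an extended nonnegative real (equal to `∞` when `u = 0`). -/
def logPlusInv (u : ℝ) : ℝ≥0∞ :=
  if u = 0 then ⊤ else ENNReal.ofReal (max (Real.log u⁻¹) 0)

open Set intervalIntegral
open Real hiding lattice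

section Lattice

variable {M : ℝ}

@[simp]
lemma latticePt_apply (M : ℝ) (m : Fin 2 → ℤ) (i : Fin 2) : latticePt M m i = M * m i := rfl

lemma latticePt_add (M : ℝ) (m k : Fin 2 → ℤ) :
    latticePt M (m + k) = latticePt M m + latticePt M k := by
  ext i
  simp [mul_add]

lemma latticeDist_nonneg (M : ℝ) (x : EuclideanSpace ℝ (Fin 2)) : 0 ≤ latticeDist M x :=
  Metric.infDist_nonneg

lemma latticeDist_le_norm_sub (M : ℝ) (x : EuclideanSpace ℝ (Fin 2)) (m : Fin 2 → ℤ) :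
    latticeDist M x ≤ ‖x - latticePt M m‖ :=
  (Metric.infDist_le_dist_of_mem (mem_range_self m)).trans_eq (dist_eq_norm _ _)

lemma image_sub_latticePt_lattice (M : ℝ) (k : Fin 2 → ℤ) :
    (· - latticePt M k) '' lattice M = lattice M := by
  rw [lattice, ← range_comp, ← (Equiv.addRight k).surjective.range_comp]
  congr 1
  ext m : 1
  simp [latticePt_add]

lemma latticeDist_sub_latticePt (M : ℝ) (x : EuclideanSpace ℝ (Fin 2)) (k : Fin 2 → ℤ) :
    latticeDist M (x - latticePt M k) = latticeDist M x := by
  rw [latticeDist, ← image_sub_latticePt_lattice M k]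
  exact Metric.infDist_image (IsometryEquiv.subRight _).isometry

lemma exists_abs_sub_latticePt_le (hM : 0 < M) (x : EuclideanSpace ℝ (Fin 2)) :
    ∃ k : Fin 2 → ℤ, ∀ i, |(x - latticePt M k) i| ≤ M / 2 := by
  refine ⟨fun i => round (x i / M), fun i => ?_⟩
  have h : x i - M * round (x i / M) = M * (x i / M - round (x i / M)) := by
    rw [mul_sub, mul_div_cancel₀ _ hM.ne']
  rw [PiLp.sub_apply, latticePt_apply, h, abs_mul, abs_of_pos hM]
  nlinarith [abs_sub_round (x i / M)]

lemma abs_intCast_le_two_mul_abs_sub (hM : 1 ≤ M) {y : ℝ} (hy : |y| ≤ M / 2) (n : ℤ) :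
    |(n : ℝ)| ≤ 2 * |y - M * n| := by
  rcases eq_or_ne n 0 with rfl | hn
  · simp
  have h1 : (1 : ℝ) ≤ |(n : ℝ)| := by exact_mod_cast Int.one_le_abs hn
  have h2 : |M * n| - |y| ≤ |y - M * n| := by
    rw [abs_sub_comm]; exact abs_sub_abs_le_abs_sub _ _
  rw [abs_mul, abs_of_pos (by linarith)] at h2
  nlinarith

lemma sq_norm_latticePt_one_le (hM : 1 ≤ M) {x : EuclideanSpace ℝ (Fin 2)}
    (hx : ∀ i, |x i| ≤ M / 2) (m : Fin 2 → ℤ) :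
    ‖latticePt 1 m‖ ^ 2 ≤ 4 * ‖x - latticePt M m‖ ^ 2 := by
  simp only [EuclideanSpace.real_norm_sq_eq, Finset.mul_sum]
  gcongr with i
  rw [PiLp.sub_apply, latticePt_apply, latticePt_apply, one_mul,
    show 4 * (x i - M * m i) ^ 2 = (2 * (x i - M * m i)) ^ 2 by ring]
  apply sq_le_sq.2
  rw [abs_mul, abs_two]
  exact abs_intCast_le_two_mul_abs_sub hM (hx i) (m i)

end Lattice

section ThetaSum

def thetaSum (M : ℝ) (x : EuclideanSpace ℝ (Fin 2)) (l : ℝ) : ℝ :=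
  ∑' m : Fin 2 → ℤ, exp (-‖x - latticePt M m‖ ^ 2 / (4 * l))

variable {M L l : ℝ} {x : EuclideanSpace ℝ (Fin 2)}

lemma covKernel_eq_integral_thetaSum (M t₁ t₂ : ℝ) (x : EuclideanSpace ℝ (Fin 2)) :
    covKernel M t₁ t₂ x = (8 * π)⁻¹ * ∫ l in |t₁ - t₂|..t₁ + t₂, l⁻¹ * thetaSum M x l :=
  rfl

lemma thetaSum_sub_latticePt (M : ℝ) (x : EuclideanSpace ℝ (Fin 2)) (k : Fin 2 → ℤ) (l : ℝ) :
    thetaSum M (x - latticePt M k) l = thetaSum M x l := by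
  rw [thetaSum, thetaSum]
  conv_rhs => rw [← (Equiv.addLeft k).tsum_eq]
  simp only [Equiv.coe_addLeft, latticePt_add, sub_sub]

lemma covKernel_sub_latticePt (M t₁ t₂ : ℝ) (x : EuclideanSpace ℝ (Fin 2)) (k : Fin 2 → ℤ) :
    covKernel M t₁ t₂ (x - latticePt M k) = covKernel M t₁ t₂ x := by
  simp only [covKernel_eq_integral_thetaSum, thetaSum_sub_latticePt]

lemma thetaSum_nonneg (M : ℝ) (x : EuclideanSpace ℝ (Fin 2)) (l : ℝ) : 0 ≤ thetaSum M x l :=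
  tsum_nonneg fun _ => (exp_pos _).le

lemma measurable_thetaSum (M : ℝ) (x : EuclideanSpace ℝ (Fin 2)) : Measurable (thetaSum M x) :=
  Measurable.tsum fun _ => by fun_prop

lemma summable_exp_neg_mul_intCast_sq {c : ℝ} (hc : 0 < c) :
    Summable fun n : ℤ => exp (-c * n ^ 2) := by
  have h : Summable fun n : ℕ => exp (-c * n ^ 2) :=
    Real.summable_exp_nat_mul_of_ge (neg_lt_zero.2 hc) fun n => by
      exact_mod_cast Nat.le_self_pow two_ne_zero n
  exact Summable.of_nat_of_neg (by simpa using h) (by simpa using h)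

lemma summable_exp_neg_sq_norm_latticePt_one_div {s : ℝ} (hs : 0 < s) :
    Summable fun m : Fin 2 → ℤ => exp (-‖latticePt 1 m‖ ^ 2 / s) := by
  have h := (summable_exp_neg_mul_intCast_sq (inv_pos.2 hs)).mul_of_nonneg
    (summable_exp_neg_mul_intCast_sq (inv_pos.2 hs)) (fun _ => (exp_pos _).le)
    (fun _ => (exp_pos _).le)
  refine ((piFinTwoEquiv fun _ => ℤ).summable_iff.2 h).congr fun m => ?_
  simp only [Function.comp_apply, piFinTwoEquiv_apply, EuclideanSpace.real_norm_sq_eq,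
    Fin.sum_univ_two, latticePt_apply, one_mul, ← exp_add]
  ring_nf

lemma thetaSum_one_zero_pos {s : ℝ} (hs : 0 < s) : 0 < thetaSum 1 0 s := by
  have h := summable_exp_neg_sq_norm_latticePt_one_div (mul_pos four_pos hs)
  simp only [thetaSum, zero_sub, norm_neg]
  exact h.tsum_pos (fun _ => (exp_pos _).le) 0 (exp_pos _)

lemma exp_neg_sq_norm_sub_latticePt_le (hM : 1 ≤ M) (hx : ∀ i, |x i| ≤ M / 2) (hl : 0 < l)
    (hlL : l ≤ L) (m : Fin 2 → ℤ) :
    exp (-‖x - latticePt M m‖ ^ 2 / (4 * l)) ≤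
      exp (-(latticeDist M x ^ 2 / 8) / l) * exp (-‖latticePt 1 m‖ ^ 2 / (32 * L)) := by
  have hd : latticeDist M x ^ 2 ≤ ‖x - latticePt M m‖ ^ 2 :=
    pow_le_pow_left₀ (latticeDist_nonneg M x) (latticeDist_le_norm_sub M x m) 2
  have hm := sq_norm_latticePt_one_le hM hx m
  have hL : ‖latticePt 1 m‖ ^ 2 / (32 * L) ≤ ‖latticePt 1 m‖ ^ 2 / (32 * l) := by gcongr
  rw [← exp_add, exp_le_exp]
  have : latticeDist M x ^ 2 / 8 / l + ‖latticePt 1 m‖ ^ 2 / (32 * l) ≤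
      ‖x - latticePt M m‖ ^ 2 / (4 * l) :=
    calc _ = (latticeDist M x ^ 2 / 8 + ‖latticePt 1 m‖ ^ 2 / 32) / l := by ring
      _ ≤ (‖x - latticePt M m‖ ^ 2 / 4) / l := by gcongr; linarith
      _ = _ := by ring
  rw [neg_div, neg_div, neg_div]
  linarith

lemma thetaSum_le (hM : 1 ≤ M) (hx : ∀ i, |x i| ≤ M / 2) (hl : 0 < l) (hlL : l ≤ L) :
    thetaSum M x l ≤ thetaSum 1 0 (8 * L) * exp (-(latticeDist M x ^ 2 / 8) / l) := by
  have hmaj := (summable_exp_neg_sq_norm_latticePt_one_div (by linarith : 0 < 32 * L)).mul_left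
    (exp (-(latticeDist M x ^ 2 / 8) / l))
  have hbound := exp_neg_sq_norm_sub_latticePt_le hM hx hl hlL
  calc thetaSum M x l
      ≤ ∑' m, exp (-(latticeDist M x ^ 2 / 8) / l) * exp (-‖latticePt 1 m‖ ^ 2 / (32 * L)) :=
        (hmaj.of_nonneg_of_le (fun _ => (exp_pos _).le) hbound).tsum_le_tsum hbound hmaj
    _ = _ := by
        rw [tsum_mul_left, mul_comm, thetaSum]
        simp only [zero_sub, norm_neg, ← mul_assoc]
        norm_num

lemma inv_mul_thetaSum_le (hM : 1 ≤ M) (hx : ∀ i, |x i| ≤ M / 2) (hl : 0 < l) (hlL : l ≤ L) :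
    l⁻¹ * thetaSum M x l ≤
      thetaSum 1 0 (8 * L) * (l⁻¹ * exp (-(latticeDist M x ^ 2 / 8) / l)) := by
  rw [mul_left_comm]
  exact mul_le_mul_of_nonneg_left (thetaSum_le hM hx hl hlL) (inv_nonneg.2 hl.le)

end ThetaSum

section InvMulExpNegDiv

variable {α a b l p : ℝ}

lemma exp_neg_le_rpow_neg {u : ℝ} (hu : 0 < u) (hp0 : 0 ≤ p) (hp1 : p ≤ 1) :
    exp (-u) ≤ u ^ (-p) := by
  have h : exp (-u) ≤ u⁻¹ := by
    rw [le_inv_comm₀ (exp_pos _) hu, exp_neg, inv_inv]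
    linarith [add_one_le_exp u]
  calc exp (-u) = exp (-u) ^ (1 : ℝ) := (rpow_one _).symm
    _ ≤ exp (-u) ^ p := rpow_le_rpow_of_exponent_ge (exp_pos _) (exp_le_one_iff.2 (by linarith)) hp1
    _ ≤ u⁻¹ ^ p := rpow_le_rpow (exp_pos _).le h hp0
    _ = u ^ (-p) := by rw [inv_rpow hu.le, rpow_neg hu.le]

lemma inv_mul_exp_neg_div_le (hα : 0 < α) (hl : 0 < l) (hp0 : 0 ≤ p) (hp1 : p ≤ 1) :
    l⁻¹ * exp (-α / l) ≤ α ^ (-p) * l ^ (p - 1) := by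
  calc l⁻¹ * exp (-α / l) ≤ l⁻¹ * (α / l) ^ (-p) := by
        rw [neg_div]
        gcongr
        exact exp_neg_le_rpow_neg (div_pos hα hl) hp0 hp1
    _ = α ^ (-p) * l ^ (p - 1) := by
        rw [div_rpow hα.le hl.le, rpow_neg hl.le, rpow_sub_one hl.ne']
        field_simp

lemma inv_mul_exp_neg_div_le_inv (hα : 0 < α) (hl : 0 ≤ l) : l⁻¹ * exp (-α / l) ≤ α⁻¹ := by
  rcases hl.eq_or_lt with rfl | hl
  · simpa using hα.le
  simpa [rpow_neg_one] using inv_mul_exp_neg_div_le hα hl zero_le_one le_rfl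

lemma intervalIntegrable_inv_mul_exp_neg_div (hα : 0 < α) (ha : 0 ≤ a) (hb : 0 ≤ b) :
    IntervalIntegrable (fun l => l⁻¹ * exp (-α / l)) volume a b := by
  refine (intervalIntegrable_const (c := α⁻¹)).mono_fun' (by fun_prop)
    ((ae_restrict_iff' measurableSet_uIoc).2 (ae_of_all _ fun l hl => ?_))
  have hl0 : 0 < l := (le_min ha hb).trans_lt hl.1
  show ‖l⁻¹ * exp (-α / l)‖ ≤ α⁻¹
  rw [Real.norm_of_nonneg (by positivity)]
  exact inv_mul_exp_neg_div_le_inv hα hl0.le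

lemma integral_inv_mul_exp_neg_div_le_sub_div (hα : 0 < α) (ha : 0 ≤ a) (hab : a ≤ b) :
    ∫ l in a..b, l⁻¹ * exp (-α / l) ≤ (b - a) / α := by
  calc ∫ l in a..b, l⁻¹ * exp (-α / l) ≤ ∫ _ in a..b, α⁻¹ :=
        integral_mono_on hab (intervalIntegrable_inv_mul_exp_neg_div hα ha (ha.trans hab))
          intervalIntegrable_const fun l hl => inv_mul_exp_neg_div_le_inv hα (ha.trans hl.1)
    _ = (b - a) / α := by simp [div_eq_mul_inv]

lemma integral_inv_mul_exp_neg_div_le_log (hα : 0 < α) (hαb : α ≤ b) :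
    ∫ l in α..b, l⁻¹ * exp (-α / l) ≤ log (b / α) := by
  have hb : 0 < b := hα.trans_le hαb
  calc ∫ l in α..b, l⁻¹ * exp (-α / l) ≤ ∫ l in α..b, l⁻¹ := by
        refine integral_mono_on hαb (intervalIntegrable_inv_mul_exp_neg_div hα hα.le hb.le)
          (intervalIntegrable_inv (fun l hl => ?_) continuousOn_id) fun l hl => ?_
        · exact (hα.trans_le (by simpa [hαb] using hl.1)).ne'
        · have hl0 : 0 < l := hα.trans_le hl.1
          refine mul_le_of_le_one_right (inv_nonneg.2 hl0.le) (exp_le_one_iff.2 ?_)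
          exact div_nonpos_of_nonpos_of_nonneg (neg_nonpos.2 hα.le) hl0.le
    _ = log (b / α) := integral_inv_of_pos hα hb

lemma integral_inv_mul_exp_neg_div_le (hα : 0 < α) (ha : 0 ≤ a) (hab : a ≤ b) :
    ∫ l in a..b, l⁻¹ * exp (-α / l) ≤ 1 + max (log (b / α)) 0 := by
  rcases le_total b α with hbα | hαb
  · have := integral_inv_mul_exp_neg_div_le_sub_div hα ha hab
    have : (b - a) / α ≤ 1 := (div_le_one hα).2 (by linarith)
    linarith [le_max_right (log (b / α)) 0]
  have hb : 0 ≤ b := hα.le.trans hαb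
  calc ∫ l in a..b, l⁻¹ * exp (-α / l) ≤ ∫ l in (0 : ℝ)..b, l⁻¹ * exp (-α / l) :=
        integral_mono_interval ha hab le_rfl
          ((ae_restrict_iff' measurableSet_Ioc).2 (ae_of_all _ fun l hl => by
            have := hl.1.le; positivity))
          (intervalIntegrable_inv_mul_exp_neg_div hα le_rfl hb)
    _ = (∫ l in (0 : ℝ)..α, l⁻¹ * exp (-α / l)) + ∫ l in α..b, l⁻¹ * exp (-α / l) :=
        (integral_add_adjacent_intervals (intervalIntegrable_inv_mul_exp_neg_div hα le_rfl hα.le)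
          (intervalIntegrable_inv_mul_exp_neg_div hα hα.le hb)).symm
    _ ≤ (α - 0) / α + log (b / α) :=
        add_le_add (integral_inv_mul_exp_neg_div_le_sub_div hα le_rfl hα.le)
          (integral_inv_mul_exp_neg_div_le_log hα hαb)
    _ ≤ 1 + max (log (b / α)) 0 := by
        rw [sub_zero, div_self hα.ne']
        exact add_le_add_right (le_max_left _ _) 1

end InvMulExpNegDiv

lemma abs_rpow_sub_rpow_le {u v p : ℝ} (hu : 0 ≤ u) (hv : 0 ≤ v) (hp0 : 0 ≤ p) (hp1 : p ≤ 1) :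
    |v ^ p - u ^ p| ≤ |v - u| ^ p := by
  wlog huv : u ≤ v generalizing u v
  · rw [abs_sub_comm, abs_sub_comm v]
    exact this hv hu (le_of_not_ge huv)
  rw [abs_of_nonneg (sub_nonneg.2 (rpow_le_rpow hu huv hp0)), abs_of_nonneg (sub_nonneg.2 huv)]
  have := rpow_add_le_add_rpow hu (sub_nonneg.2 huv) hp0 hp1
  rw [add_sub_cancel] at this
  linarith

lemma abs_integral_le_of_abs_le_mul_rpow_sub_one {F : ℝ → ℝ} {c p u v : ℝ} (hc : 0 ≤ c)
    (hu : 0 ≤ u) (hv : 0 ≤ v) (hp0 : 0 < p) (hp1 : p ≤ 1)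
    (hF : ∀ l ∈ uIoc u v, |F l| ≤ c * l ^ (p - 1)) :
    |∫ l in u..v, F l| ≤ c * |v - u| ^ p / p := by
  have hint : IntervalIntegrable (fun l => c * l ^ (p - 1)) volume u v :=
    (intervalIntegral.intervalIntegrable_rpow' (by linarith)).const_mul c
  calc |∫ l in u..v, F l| ≤ |∫ l in u..v, c * l ^ (p - 1)| :=
        norm_integral_le_abs_of_norm_le (f := F) ((ae_restrict_iff' measurableSet_uIoc).2 (ae_of_all _ hF))
          hint
    _ = c * |v ^ p - u ^ p| / p := by
        rw [intervalIntegral.integral_const_mul, integral_rpow (Or.inl (by linarith)), sub_add_cancel, abs_mul,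
          abs_div, abs_of_nonneg hc, abs_of_pos hp0, mul_div_assoc]
    _ ≤ c * |v - u| ^ p / p := by gcongr; exact abs_rpow_sub_rpow_le hu hv hp0.le hp1

section FundamentalDomain

variable {M L a b : ℝ} {x : EuclideanSpace ℝ (Fin 2)}

lemma intervalIntegrable_inv_mul_thetaSum (hM : 1 ≤ M) (hx : ∀ i, |x i| ≤ M / 2)
    (hd : 0 < latticeDist M x) (ha : a ∈ Icc 0 L) (hb : b ∈ Icc 0 L) :
    IntervalIntegrable (fun l => l⁻¹ * thetaSum M x l) volume a b := by
  refine ((intervalIntegrable_inv_mul_exp_neg_div (α := latticeDist M x ^ 2 / 8)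
    (by positivity) ha.1 hb.1).const_mul (thetaSum 1 0 (8 * L))).mono_fun'
    (measurable_inv.mul (measurable_thetaSum M x)).aestronglyMeasurable
    ((ae_restrict_iff' measurableSet_uIoc).2 (ae_of_all _ fun l hl => ?_))
  have hl0 : 0 < l := (le_min ha.1 hb.1).trans_lt hl.1
  show ‖l⁻¹ * thetaSum M x l‖ ≤ _
  rw [Real.norm_of_nonneg (mul_nonneg (inv_nonneg.2 hl0.le) (thetaSum_nonneg M x l))]
  exact inv_mul_thetaSum_le hM hx hl0 (hl.2.trans (max_le ha.2 hb.2))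

lemma integral_inv_mul_thetaSum_le (hM : 1 ≤ M) (hx : ∀ i, |x i| ≤ M / 2)
    (hd : 0 < latticeDist M x) (ha : 0 ≤ a) (hab : a ≤ b) (hbL : b ≤ L) :
    ∫ l in a..b, l⁻¹ * thetaSum M x l ≤
      thetaSum 1 0 (8 * L) * (1 + max (log (b / (latticeDist M x ^ 2 / 8))) 0) := by
  have hα : 0 < latticeDist M x ^ 2 / 8 := by positivity
  calc ∫ l in a..b, l⁻¹ * thetaSum M x l
      ≤ ∫ l in a..b, thetaSum 1 0 (8 * L) * (l⁻¹ * exp (-(latticeDist M x ^ 2 / 8) / l)) :=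
        integral_mono_on_of_le_Ioo hab
          (intervalIntegrable_inv_mul_thetaSum hM hx hd ⟨ha, hab.trans hbL⟩ ⟨ha.trans hab, hbL⟩)
          ((intervalIntegrable_inv_mul_exp_neg_div hα ha (ha.trans hab)).const_mul _)
          fun l hl => inv_mul_thetaSum_le hM hx (ha.trans_lt hl.1) (hl.2.le.trans hbL)
    _ ≤ thetaSum 1 0 (8 * L) * (1 + max (log (b / (latticeDist M x ^ 2 / 8))) 0) := by
        rw [intervalIntegral.integral_const_mul]
        exact mul_le_mul_of_nonneg_left (integral_inv_mul_exp_neg_div_le hα ha hab)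
          (thetaSum_nonneg _ _ _)

lemma abs_integral_inv_mul_thetaSum_le (hM : 1 ≤ M) (hx : ∀ i, |x i| ≤ M / 2)
    (hd : 0 < latticeDist M x) {p : ℝ} (hp0 : 0 < p) (hp1 : p ≤ 1) (ha : a ∈ Icc 0 L)
    (hb : b ∈ Icc 0 L) :
    |∫ l in a..b, l⁻¹ * thetaSum M x l| ≤
      thetaSum 1 0 (8 * L) * (latticeDist M x ^ 2 / 8) ^ (-p) * |b - a| ^ p / p := by
  have hθ := thetaSum_nonneg 1 0 (8 * L)
  refine abs_integral_le_of_abs_le_mul_rpow_sub_one (by positivity) ha.1 hb.1 hp0 hp1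
    fun l hl => ?_
  have hl0 : 0 < l := (le_min ha.1 hb.1).trans_lt hl.1
  rw [abs_of_nonneg (mul_nonneg (inv_nonneg.2 hl0.le) (thetaSum_nonneg M x l)), mul_assoc]
  calc l⁻¹ * thetaSum M x l
      ≤ thetaSum 1 0 (8 * L) * (l⁻¹ * exp (-(latticeDist M x ^ 2 / 8) / l)) :=
        inv_mul_thetaSum_le hM hx hl0 (hl.2.trans (max_le ha.2 hb.2))
    _ ≤ thetaSum 1 0 (8 * L) * ((latticeDist M x ^ 2 / 8) ^ (-p) * l ^ (p - 1)) :=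
        mul_le_mul_of_nonneg_left (inv_mul_exp_neg_div_le (by positivity) hl0 hp0.le hp1) hθ

end FundamentalDomain

lemma max_log_div_le {d b L : ℝ} (hd : 0 < d) (hb : 0 ≤ b) (hbL : b ≤ L) :
    max (log (b / (d ^ 2 / 8))) 0 ≤ |log (8 * L)| + 2 * max (log d⁻¹) 0 := by
  refine max_le ?_ (by positivity)
  rcases hb.eq_or_lt with rfl | hb
  · simp only [zero_div, log_zero]; positivity
  have hlog : log (b / (d ^ 2 / 8)) = log (8 * b) + 2 * log d⁻¹ := by
    rw [show b / (d ^ 2 / 8) = 8 * b * d⁻¹ ^ 2 by field_simp, log_mul (by positivity)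
      (by positivity), log_pow, Nat.cast_ofNat]
  have h8 : log (8 * b) ≤ |log (8 * L)| :=
    (log_le_log (by positivity) (by linarith)).trans (le_abs_self _)
  linarith [le_max_left (log d⁻¹) 0]

section CovKernel

variable {M T t₁ t₂ : ℝ} {x : EuclideanSpace ℝ (Fin 2)}

theorem covKernel_le (hM : 1 ≤ M) (ht₁ : t₁ ∈ Icc 0 T) (ht₂ : t₂ ∈ Icc 0 T)
    (hd : 0 < latticeDist M x) :
    covKernel M t₁ t₂ x ≤ (8 * π)⁻¹ * thetaSum 1 0 (16 * T) * (2 + |log (16 * T)|) *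
      (1 + max (log (latticeDist M x)⁻¹) 0) := by
  obtain ⟨k, hk⟩ := exists_abs_sub_latticePt_le (M := M) (by linarith) x
  rw [← latticeDist_sub_latticePt M x k] at hd ⊢
  rw [← covKernel_sub_latticePt M t₁ t₂ x k, covKernel_eq_integral_thetaSum]
  generalize x - latticePt M k = y at hk hd ⊢
  have hab : |t₁ - t₂| ≤ t₁ + t₂ := abs_sub_le_iff.2 ⟨by linarith [ht₂.1], by linarith [ht₁.1]⟩
  have hb : t₁ + t₂ ≤ 2 * T := by linarith [ht₁.2, ht₂.2]
  have hI := integral_inv_mul_thetaSum_le hM hk hd (abs_nonneg _) hab hb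
  have hlog := max_log_div_le hd (by linarith [ht₁.1, ht₂.1]) hb
  rw [show 8 * (2 * T) = 16 * T by ring] at hI hlog
  set A := |log (16 * T)|
  set D := max (log (latticeDist M y)⁻¹) 0
  have hAD : 1 + (A + 2 * D) ≤ (2 + A) * (1 + D) := by
    nlinarith [mul_nonneg (abs_nonneg (log (16 * T))) (le_max_right (log (latticeDist M y)⁻¹) 0)]
  have hθ := thetaSum_nonneg 1 0 (16 * T)
  calc (8 * π)⁻¹ * ∫ l in |t₁ - t₂|..t₁ + t₂, l⁻¹ * thetaSum M y l
      ≤ (8 * π)⁻¹ * (thetaSum 1 0 (16 * T) * (1 + (A + 2 * D))) := by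
        gcongr; exact hI.trans (by gcongr)
    _ ≤ (8 * π)⁻¹ * (thetaSum 1 0 (16 * T) * ((2 + A) * (1 + D))) := by gcongr
    _ = _ := by ring

theorem abs_covKernel_sub_le {p : ℝ} (hp0 : 0 < p) (hp1 : p ≤ 1) (hM : 1 ≤ M)
    (ht₁ : t₁ ∈ Icc 0 T) (ht₂ : t₂ ∈ Icc 0 T) (hd : 0 < latticeDist M x) :
    |covKernel M t₁ t₁ x - covKernel M t₁ t₂ x| ≤
      (8 * π)⁻¹ * 2 * thetaSum 1 0 (16 * T) * 8 ^ p / p * |t₁ - t₂| ^ p /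
        latticeDist M x ^ (2 * p) := by
  obtain ⟨k, hk⟩ := exists_abs_sub_latticePt_le (M := M) (by linarith) x
  rw [← latticeDist_sub_latticePt M x k] at hd ⊢
  rw [← covKernel_sub_latticePt M t₁ t₁ x k, ← covKernel_sub_latticePt M t₁ t₂ x k]
  generalize x - latticePt M k = y at hk hd ⊢
  have hmem : ∀ {u v}, 0 ≤ u → 0 ≤ v → u ≤ T → v ≤ T → u + v ∈ Icc 0 (2 * T) :=
    fun hu hv huT hvT => ⟨by linarith, by linarith⟩
  have hδ : |t₁ - t₂| ∈ Icc 0 (2 * T) :=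
    ⟨abs_nonneg _, abs_sub_le_iff.2 ⟨by linarith [ht₁.2, ht₂.1, ht₂.2], by linarith [ht₁.1, ht₁.2, ht₂.2]⟩⟩
  have h0 : (0 : ℝ) ∈ Icc 0 (2 * T) := ⟨le_rfl, by linarith [ht₁.1, ht₁.2]⟩
  have h11 := hmem ht₁.1 ht₁.1 ht₁.2 ht₁.2
  have h12 := hmem ht₁.1 ht₂.1 ht₁.2 ht₂.2
  have hsplit : covKernel M t₁ t₁ y - covKernel M t₁ t₂ y = (8 * π)⁻¹ *
      ((∫ l in (0 : ℝ)..|t₁ - t₂|, l⁻¹ * thetaSum M y l) -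
        ∫ l in t₁ + t₁..t₁ + t₂, l⁻¹ * thetaSum M y l) := by
    rw [covKernel_eq_integral_thetaSum, covKernel_eq_integral_thetaSum, sub_self, abs_zero,
      ← mul_sub, integral_interval_sub_interval_comm
        (intervalIntegrable_inv_mul_thetaSum hM hk hd h0 h11)
        (intervalIntegrable_inv_mul_thetaSum hM hk hd hδ h12)
        (intervalIntegrable_inv_mul_thetaSum hM hk hd h0 hδ)]
  have hα : (latticeDist M y ^ 2 / 8) ^ (-p) = 8 ^ p / latticeDist M y ^ (2 * p) := by
    rw [div_rpow (by positivity) (by norm_num), rpow_neg (by positivity), rpow_neg (by positivity),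
      ← rpow_natCast, ← rpow_mul hd.le, Nat.cast_ofNat, inv_div_inv]
  have hI₁ := abs_integral_inv_mul_thetaSum_le hM hk hd hp0 hp1 h0 hδ
  have hI₂ := abs_integral_inv_mul_thetaSum_le hM hk hd hp0 hp1 h11 h12
  rw [show 8 * (2 * T) = 16 * T by ring, hα] at hI₁ hI₂
  rw [sub_zero, abs_abs] at hI₁
  rw [show t₁ + t₂ - (t₁ + t₁) = -(t₁ - t₂) by ring, abs_neg] at hI₂
  rw [hsplit, abs_mul, abs_of_pos (by positivity)]
  calc (8 * π)⁻¹ * |(∫ l in (0 : ℝ)..|t₁ - t₂|, l⁻¹ * thetaSum M y l) -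
        ∫ l in t₁ + t₁..t₁ + t₂, l⁻¹ * thetaSum M y l|
      ≤ (8 * π)⁻¹ * (|∫ l in (0 : ℝ)..|t₁ - t₂|, l⁻¹ * thetaSum M y l| +
          |∫ l in t₁ + t₁..t₁ + t₂, l⁻¹ * thetaSum M y l|) := by gcongr; exact abs_sub _ _
    _ ≤ (8 * π)⁻¹ * (thetaSum 1 0 (16 * T) * (8 ^ p / latticeDist M y ^ (2 * p)) *
          |t₁ - t₂| ^ p / p * 2) := by gcongr; linarith
    _ = _ := by ring

end CovKernel


/-- **Bounds on the heat-kernel covariance:** (i) the logarithmic bound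
`𝒦_M(t₁,t₂;x) ≤ C (1 + log₊(|x|_M⁻¹))`; (ii) the time-regularity bound
`|𝒦_M(t₁,t₁;x) - 𝒦_M(t₁,t₂;x)| ≤ C |t₁-t₂|^λ / |x|_M^{2λ}`. -/
theorem covKernel_bounds :
    (∀ T : ℝ, 0 < T → ∃ C : ℝ, 0 < C ∧ ∀ M : ℝ, 1 ≤ M →
      ∀ t₁ t₂ : ℝ, t₁ ∈ Set.Icc 0 T → t₂ ∈ Set.Icc 0 T →
      ∀ x : EuclideanSpace ℝ (Fin 2),
        ENNReal.ofReal (covKernel M t₁ t₂ x) ≤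
          ENNReal.ofReal C * (1 + logPlusInv (latticeDist M x))) ∧
    (∀ T : ℝ, 0 < T → ∀ lam : ℝ, lam ∈ Set.Ioc (0 : ℝ) 1 → ∃ C : ℝ, 0 < C ∧
      ∀ M : ℝ, 1 ≤ M → ∀ t₁ t₂ : ℝ, t₁ ∈ Set.Icc 0 T → t₂ ∈ Set.Icc 0 T →
      ∀ x : EuclideanSpace ℝ (Fin 2),
        ENNReal.ofReal |covKernel M t₁ t₁ x - covKernel M t₁ t₂ x| ≤
          ENNReal.ofReal (C * |t₁ - t₂| ^ lam) /
            ENNReal.ofReal (latticeDist M x ^ (2 * lam))) := by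

  refine ⟨fun T hT => ?_, fun T hT p ⟨hp0, hp1⟩ => ?_⟩
  · have hC : 0 < (8 * π)⁻¹ * thetaSum 1 0 (16 * T) * (2 + |log (16 * T)|) :=
      mul_pos (mul_pos (by positivity) (thetaSum_one_zero_pos (by positivity))) (by positivity)
    refine ⟨_, hC, fun M hM t₁ t₂ ht₁ ht₂ x => ?_⟩
    rcases (latticeDist_nonneg M x).eq_or_lt with hd | hd
    · rw [logPlusInv, if_pos hd.symm, add_top,
        ENNReal.mul_top (ENNReal.ofReal_pos.2 hC).ne']
      exact le_top
    rw [logPlusInv, if_neg hd.ne', ← ENNReal.ofReal_one,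
      ← ENNReal.ofReal_add zero_le_one (le_max_right _ _), ← ENNReal.ofReal_mul hC.le]
    exact ENNReal.ofReal_le_ofReal (covKernel_le hM ht₁ ht₂ hd)
  · have hC : 0 < (8 * π)⁻¹ * 2 * thetaSum 1 0 (16 * T) * 8 ^ p / p :=
      div_pos (mul_pos (mul_pos (by positivity) (thetaSum_one_zero_pos (by positivity)))
        (by positivity)) hp0
    refine ⟨_, hC, fun M hM t₁ t₂ ht₁ ht₂ x => ?_⟩
    rcases (latticeDist_nonneg M x).eq_or_lt with hd | hd
    · rcases eq_or_ne t₁ t₂ with rfl | ht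
      · simp
      rw [← hd, zero_rpow (by positivity), ENNReal.ofReal_zero,
        ENNReal.div_zero (ENNReal.ofReal_pos.2 (by positivity)).ne']
      exact le_top
    rw [← ENNReal.ofReal_div_of_pos (rpow_pos_of_pos hd _)]
    exact ENNReal.ofReal_le_ofReal (abs_covKernel_sub_le hp0 hp1 hM ht₁ ht₂ hd)
end
end

section
/- (Iterated integral bounds.) Let γ₁, γ₂ ≥ 0 with γ₁ + γ₂ < 1, and define recursively I₀(t) = 1 and I_{n+1}(t) = ∫_0^t (t−s)^{−γ₁} s^{−γ₂} I_n(s) ds for n ∈ ℕ and t > 0. Then for every γ̃ > γ₁ and every T < ∞, there exists C < ∞ such that uniformly over n ∈ ℕ and 0 < t ≤ T, I_n(t) ≤ C / (n!)^{1−γ̃}. -/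
/-!
The substitution `s = t u` turns each step of the recursion into a Beta integral, so that
`I_n(t) = t^{n(1-γ)} ∏_{k<n} B(b_k + 1, 1 - γ₁)` with `γ = γ₁ + γ₂` and `b_k = k(1-γ) - γ₂`.
Splitting the Beta integral at `1/(b+1)` gives `B(b + 1, 1 - γ₁) = O((b + 1)^{γ₁-1})`, and
`b_k + 1 ≥ (1-γ)(k+1)`, hence `I_n(t) ≤ r^n (n!)^{γ₁-1}` for `t ≤ T`. Finally the geometric
factor is absorbed: `r^n = O((n!)^{γ̃-γ₁})` because `x^n / n! → 0` for every `x`.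
-/

open MeasureTheory

noncomputable section

/-- The iterated integrals `I₀(t) = 1`,
`I_{n+1}(t) = ∫₀ᵗ (t-s)^{-γ₁} s^{-γ₂} I_n(s) ds`. -/
def iterInt (γ₁ γ₂ : ℝ) : ℕ → ℝ → ℝ
  | 0, _ => 1
  | n + 1, t => ∫ s in (0 : ℝ)..t, (t - s) ^ (-γ₁) * s ^ (-γ₂) * iterInt γ₁ γ₂ n s

open intervalIntegral Set Nat

/-- Euler's Beta function `B(p + 1, q + 1)`. -/
def betaInt (p q : ℝ) : ℝ := ∫ v in (0 : ℝ)..1, v ^ p * (1 - v) ^ q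

lemma intervalIntegrable_rpow_mul_one_sub_rpow_half {p : ℝ} (q : ℝ) (hp : -1 < p) :
    IntervalIntegrable (fun v : ℝ => v ^ p * (1 - v) ^ q) volume 0 (1 / 2) := by
  refine (intervalIntegrable_rpow' hp).mul_continuousOn <|
    ContinuousOn.rpow_const (by fun_prop) fun v hv => Or.inl ?_
  rw [uIcc_of_le (by norm_num)] at hv
  linarith [hv.2]

lemma intervalIntegrable_rpow_mul_one_sub_rpow {p q : ℝ} (hp : -1 < p) (hq : -1 < q) :
    IntervalIntegrable (fun v : ℝ => v ^ p * (1 - v) ^ q) volume 0 1 := by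
  refine (intervalIntegrable_rpow_mul_one_sub_rpow_half q hp).trans ?_
  convert ((intervalIntegrable_rpow_mul_one_sub_rpow_half p hq).comp_sub_left 1).symm using 1
  · ext v; simp [mul_comm]
  · norm_num
  · norm_num

lemma betaInt_comm (p q : ℝ) : betaInt p q = betaInt q p := by
  simpa [betaInt, mul_comm] using
    integral_comp_sub_left (fun v : ℝ => v ^ q * (1 - v) ^ p) 1 (a := 0) (b := 1)

lemma betaInt_nonneg (p q : ℝ) : 0 ≤ betaInt p q :=
  integral_nonneg zero_le_one fun _ hv =>
    mul_nonneg (Real.rpow_nonneg hv.1 _) (Real.rpow_nonneg (sub_nonneg.2 hv.2) _)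

lemma betaInt_antitoneOn {p : ℝ} (hp : -1 < p) : AntitoneOn (betaInt p) (Ioi (-1)) := by
  intro q hq q' hq' hqq'
  refine integral_mono_on_of_le_Ioo zero_le_one
    (intervalIntegrable_rpow_mul_one_sub_rpow hp hq')
    (intervalIntegrable_rpow_mul_one_sub_rpow hp hq) fun v hv => ?_
  exact mul_le_mul_of_nonneg_left
    (Real.rpow_le_rpow_of_exponent_ge (by linarith [hv.2]) (by linarith [hv.1]) hqq')
    (Real.rpow_nonneg hv.1.le _)

lemma integral_sub_rpow_mul_rpow {t : ℝ} (ht : 0 < t) (p q : ℝ) :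
    ∫ s in (0 : ℝ)..t, (t - s) ^ q * s ^ p = t ^ (p + q + 1) * betaInt p q := by
  have hsub := integral_comp_mul_left (a := 0) (b := 1) (fun s => (t - s) ^ q * s ^ p) ht.ne'
  simp only [mul_zero, mul_one, smul_eq_mul] at hsub
  have hscale : ∀ u ∈ uIcc (0 : ℝ) 1,
      (t - t * u) ^ q * (t * u) ^ p = t ^ (p + q) * (u ^ p * (1 - u) ^ q) := by
    intro u hu
    rw [uIcc_of_le zero_le_one] at hu
    rw [show t - t * u = t * (1 - u) by ring, Real.mul_rpow ht.le (by linarith [hu.2]),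
      Real.mul_rpow ht.le hu.1, Real.rpow_add ht]
    ring
  rw [integral_congr hscale, intervalIntegral.integral_const_mul] at hsub
  rw [betaInt, Real.rpow_add_one ht.ne', mul_right_comm, hsub]
  field_simp

lemma iterInt_eq_prod_betaInt_mul_rpow (γ₁ γ₂ : ℝ) (n : ℕ) {t : ℝ} (ht : 0 < t) :
    iterInt γ₁ γ₂ n t = (∏ k ∈ Finset.range n, betaInt (k * (1 - (γ₁ + γ₂)) - γ₂) (-γ₁)) *
      t ^ (n * (1 - (γ₁ + γ₂))) := by
  induction n generalizing t with
  | zero => simp [iterInt]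
  | succ n ih =>
    set P := ∏ k ∈ Finset.range n, betaInt (k * (1 - (γ₁ + γ₂)) - γ₂) (-γ₁)
    have hintegrand : ∀ s ∈ uIoc (0 : ℝ) t, (t - s) ^ (-γ₁) * s ^ (-γ₂) * iterInt γ₁ γ₂ n s =
        P * ((t - s) ^ (-γ₁) * s ^ (n * (1 - (γ₁ + γ₂)) - γ₂)) := by
      intro s hs
      rw [uIoc_of_le ht.le] at hs
      rw [ih hs.1, Real.rpow_sub hs.1, Real.rpow_neg hs.1.le]
      ring
    rw [iterInt, integral_congr_ae (ae_of_all _ hintegrand), intervalIntegral.integral_const_mul,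
      integral_sub_rpow_mul_rpow ht, Finset.prod_range_succ]
    rw [show (n * (1 - (γ₁ + γ₂)) - γ₂ + -γ₁ + 1 : ℝ) = (n + 1 : ℕ) * (1 - (γ₁ + γ₂)) by
      push_cast; ring]
    ring

lemma integral_rpow_mul_one_sub_rpow_le_left {a q m : ℝ} (ha : a < 1) (hq : 0 ≤ q)
    (hm : 0 < m) (hm1 : m ≤ 1) :
    ∫ v in (0 : ℝ)..m, v ^ (-a) * (1 - v) ^ q ≤ m ^ (1 - a) / (1 - a) := by
  have hint :=
    intervalIntegrable_rpow_mul_one_sub_rpow (p := -a) (by linarith) (by linarith : (-1 : ℝ) < q)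
  calc ∫ v in (0 : ℝ)..m, v ^ (-a) * (1 - v) ^ q ≤ ∫ v in (0 : ℝ)..m, v ^ (-a) := by
        refine integral_mono_on hm.le
          (hint.mono_set (uIcc_subset_uIcc_left (mem_uIcc_of_le hm.le hm1)))
          (intervalIntegrable_rpow' (by linarith)) fun v hv =>
            mul_le_of_le_one_right (Real.rpow_nonneg hv.1 _)
              (Real.rpow_le_one (by linarith [hv.2]) (by linarith [hv.1]) hq)
    _ = m ^ (1 - a) / (1 - a) := by
        rw [integral_rpow (Or.inl (by linarith)), Real.zero_rpow (by linarith), sub_zero,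
          neg_add_eq_sub]

lemma integral_rpow_mul_one_sub_rpow_le_right {a q m : ℝ} (ha : 0 ≤ a) (ha1 : a < 1)
    (hq : -1 < q) (hm : 0 < m) (hm1 : m ≤ 1) :
    ∫ v in m..1, v ^ (-a) * (1 - v) ^ q ≤ m ^ (-a) / (q + 1) := by
  have hint := intervalIntegrable_rpow_mul_one_sub_rpow (p := -a) (by linarith) hq
  have hpow : IntervalIntegrable (fun v : ℝ => (1 - v) ^ q) volume m 1 := by
    simpa using ((intervalIntegrable_rpow' hq (a := 0) (b := 1 - m)).comp_sub_left 1).symm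
  calc ∫ v in m..1, v ^ (-a) * (1 - v) ^ q ≤ ∫ v in m..1, m ^ (-a) * (1 - v) ^ q := by
        refine integral_mono_on hm1
          (hint.mono_set (uIcc_subset_uIcc_right (mem_uIcc_of_le hm.le hm1)))
          (hpow.const_mul _) fun v hv =>
            mul_le_mul_of_nonneg_right (Real.rpow_le_rpow_of_nonpos hm hv.1 (by linarith))
              (Real.rpow_nonneg (by linarith [hv.2]) _)
    _ = m ^ (-a) * ((1 - m) ^ (q + 1) / (q + 1)) := by
        rw [intervalIntegral.integral_const_mul, integral_comp_sub_left (fun v => v ^ q),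
          sub_self, integral_rpow (Or.inl hq), Real.zero_rpow (by linarith), sub_zero]
    _ ≤ m ^ (-a) / (q + 1) := by
        rw [mul_div_assoc', div_le_div_iff_of_pos_right (by linarith)]
        exact mul_le_of_le_one_right (Real.rpow_nonneg hm.le _)
          (Real.rpow_le_one (by linarith) (by linarith) (by linarith))

lemma betaInt_neg_le_rpow {a q : ℝ} (ha : 0 ≤ a) (ha1 : a < 1) (hq : 0 ≤ q) :
    betaInt (-a) q ≤ (1 / (1 - a) + 1) * (q + 1) ^ (a - 1) := by
  have hq1 : 0 < q + 1 := by linarith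
  set m := (q + 1)⁻¹
  have hm : 0 < m := inv_pos.2 hq1
  have hm1 : m ≤ 1 := inv_le_one_of_one_le₀ (by linarith)
  have hint :=
    intervalIntegrable_rpow_mul_one_sub_rpow (p := -a) (by linarith) (by linarith : -1 < q)
  have hmem : m ∈ uIcc (0 : ℝ) 1 := mem_uIcc_of_le hm.le hm1
  calc betaInt (-a) q
      = (∫ v in (0 : ℝ)..m, v ^ (-a) * (1 - v) ^ q) + ∫ v in m..1, v ^ (-a) * (1 - v) ^ q :=
        (integral_add_adjacent_intervals (hint.mono_set (uIcc_subset_uIcc_left hmem))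
          (hint.mono_set (uIcc_subset_uIcc_right hmem))).symm
    _ ≤ m ^ (1 - a) / (1 - a) + m ^ (-a) / (q + 1) :=
        add_le_add (integral_rpow_mul_one_sub_rpow_le_left ha1 hq hm hm1)
          (integral_rpow_mul_one_sub_rpow_le_right ha ha1 (by linarith) hm hm1)
    _ = (1 / (1 - a) + 1) * (q + 1) ^ (a - 1) := by
        rw [Real.inv_rpow hq1.le, Real.inv_rpow hq1.le, ← Real.rpow_neg hq1.le,
          ← Real.rpow_neg hq1.le, neg_neg, neg_sub, ← Real.rpow_sub_one hq1.ne']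
        ring

lemma exists_betaInt_neg_le_rpow {a q₀ : ℝ} (ha : 0 ≤ a) (ha1 : a < 1) (hq₀ : -1 < q₀) :
    ∃ A, 0 ≤ A ∧ ∀ q, q₀ ≤ q → betaInt (-a) q ≤ A * (q + 1) ^ (a - 1) := by
  set A := max (betaInt (-a) q₀) (1 / (1 - a) + 1)
  have hA : 0 ≤ A := (betaInt_nonneg _ _).trans (le_max_left _ _)
  refine ⟨A, hA, fun q hq => ?_⟩
  rcases le_or_gt 0 q with hq0 | hq0
  · exact (betaInt_neg_le_rpow ha ha1 hq0).trans
      (mul_le_mul_of_nonneg_right (le_max_right _ _) (Real.rpow_nonneg (by linarith) _))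
  · calc betaInt (-a) q ≤ betaInt (-a) q₀ :=
          betaInt_antitoneOn (by linarith) hq₀ (show -1 < q by linarith) hq
      _ ≤ A := le_max_left _ _
      _ ≤ A * (q + 1) ^ (a - 1) := le_mul_of_one_le_right hA
          (Real.one_le_rpow_of_pos_of_le_one_of_nonpos (by linarith) (by linarith) (by linarith))

lemma exists_betaInt_natCast_mul_sub_le {γ₁ γ₂ : ℝ} (hγ₁ : 0 ≤ γ₁) (hγ₂ : 0 ≤ γ₂)
    (hsum : γ₁ + γ₂ < 1) :
    ∃ c, 0 ≤ c ∧ ∀ k : ℕ,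
      betaInt (k * (1 - (γ₁ + γ₂)) - γ₂) (-γ₁) ≤ c * ((k : ℝ) + 1) ^ (γ₁ - 1) := by
  set δ := 1 - (γ₁ + γ₂)
  have hδ : 0 < δ := by linarith
  obtain ⟨A, hA, hbound⟩ := exists_betaInt_neg_le_rpow hγ₁ (by linarith) (by linarith : -1 < -γ₂)
  refine ⟨A * δ ^ (γ₁ - 1), by positivity, fun k => ?_⟩
  have hk : (0 : ℝ) ≤ k * δ := by positivity
  calc betaInt (k * δ - γ₂) (-γ₁) = betaInt (-γ₁) (k * δ - γ₂) := betaInt_comm _ _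
    _ ≤ A * (k * δ - γ₂ + 1) ^ (γ₁ - 1) := hbound _ (by linarith)
    _ ≤ A * (δ * (k + 1)) ^ (γ₁ - 1) :=
        mul_le_mul_of_nonneg_left
          (Real.rpow_le_rpow_of_nonpos (by positivity) (by linarith) (by linarith)) hA
    _ = A * δ ^ (γ₁ - 1) * ((k : ℝ) + 1) ^ (γ₁ - 1) := by
        rw [Real.mul_rpow hδ.le (by positivity)]
        ring

lemma prod_range_le_pow_mul_factorial_rpow {f : ℕ → ℝ} {c β : ℝ} (hf₀ : ∀ k, 0 ≤ f k)
    (hf : ∀ k, f k ≤ c * ((k : ℝ) + 1) ^ β) (n : ℕ) :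
    ∏ k ∈ Finset.range n, f k ≤ c ^ n * (n ! : ℝ) ^ β :=
  calc ∏ k ∈ Finset.range n, f k ≤ ∏ k ∈ Finset.range n, c * ((k : ℝ) + 1) ^ β :=
        Finset.prod_le_prod (fun k _ => hf₀ k) fun k _ => hf k
    _ = c ^ n * (n ! : ℝ) ^ β := by
        rw [Finset.prod_mul_distrib, Finset.prod_const, Finset.card_range,
          Real.finsetProd_rpow _ _ fun k _ => by positivity,
          ← Finset.prod_range_add_one_eq_factorial]
        push_cast
        rfl

lemma exists_pow_le_mul_factorial_rpow (r : ℝ) {ε : ℝ} (hε : 0 < ε) :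
    ∃ C, ∀ n : ℕ, r ^ n ≤ C * (n ! : ℝ) ^ ε := by
  set x := |r| ^ ε⁻¹
  obtain ⟨C₀, hC₀⟩ := (FloorSemiring.tendsto_pow_div_factorial_atTop x).bddAbove_range
  have hxC₀ (n : ℕ) : x ^ n ≤ C₀ * n ! :=
    (div_le_iff₀ (by positivity)).1 (hC₀ (mem_range_self n))
  have hC₀_nonneg : 0 ≤ C₀ := zero_le_one.trans (by simpa using hxC₀ 0)
  refine ⟨C₀ ^ ε, fun n => ?_⟩
  calc r ^ n ≤ |r| ^ n := (le_abs_self _).trans (abs_pow r n).le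
    _ = (x ^ n) ^ ε := by
        rw [← Real.rpow_natCast, ← Real.rpow_natCast, ← Real.rpow_mul (by positivity),
          ← Real.rpow_mul (abs_nonneg r)]
        congr 1
        field_simp
    _ ≤ (C₀ * n !) ^ ε := by gcongr; exact hxC₀ n
    _ = C₀ ^ ε * (n ! : ℝ) ^ ε := Real.mul_rpow hC₀_nonneg (by positivity)

lemma exists_iterInt_le {γ₁ γ₂ : ℝ} (hγ₁ : 0 ≤ γ₁) (hγ₂ : 0 ≤ γ₂) (hsum : γ₁ + γ₂ < 1) :
    ∃ c, 0 ≤ c ∧ ∀ n : ℕ, ∀ {t : ℝ}, 0 < t →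
      iterInt γ₁ γ₂ n t ≤ (c * t ^ (1 - (γ₁ + γ₂))) ^ n * (n ! : ℝ) ^ (γ₁ - 1) := by
  obtain ⟨c, hc, hcoeff⟩ := exists_betaInt_natCast_mul_sub_le hγ₁ hγ₂ hsum
  refine ⟨c, hc, fun n t ht => ?_⟩
  rw [iterInt_eq_prod_betaInt_mul_rpow γ₁ γ₂ n ht, mul_comm (n : ℝ), Real.rpow_mul_natCast ht.le,
    mul_pow, mul_right_comm]
  gcongr
  exact prod_range_le_pow_mul_factorial_rpow (fun _ => betaInt_nonneg _ _) hcoeff n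

/-- **Iterated integral bounds:** for `γ₁ + γ₂ < 1` and any `γ̃ > γ₁`,
`I_n(t) ≤ C / (n!)^{1 - γ̃}` uniformly over `n` and `0 < t ≤ T`. -/
theorem iterInt_bound (γ₁ γ₂ : ℝ) (hγ₁ : 0 ≤ γ₁) (hγ₂ : 0 ≤ γ₂) (hsum : γ₁ + γ₂ < 1)
    (γt : ℝ) (hγt : γ₁ < γt) (T : ℝ) :
    ∃ C : ℝ, ∀ n : ℕ, ∀ t : ℝ, 0 < t → t ≤ T →
      iterInt γ₁ γ₂ n t ≤ C / ((n.factorial : ℝ)) ^ (1 - γt) := by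
  obtain ⟨c, hc, hI⟩ := exists_iterInt_le hγ₁ hγ₂ hsum
  obtain ⟨C, hC⟩ := exists_pow_le_mul_factorial_rpow (c * T ^ (1 - (γ₁ + γ₂))) (sub_pos.2 hγt)
  refine ⟨C, fun n t ht htT => ?_⟩
  have hfac : (0 : ℝ) < n ! := by positivity
  calc iterInt γ₁ γ₂ n t ≤ (c * t ^ (1 - (γ₁ + γ₂))) ^ n * (n ! : ℝ) ^ (γ₁ - 1) := hI n ht
    _ ≤ (c * T ^ (1 - (γ₁ + γ₂))) ^ n * (n ! : ℝ) ^ (γ₁ - 1) := by gcongr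
    _ ≤ C * (n ! : ℝ) ^ (γt - γ₁) * (n ! : ℝ) ^ (γ₁ - 1) := by gcongr; exact hC n
    _ = C / (n.factorial : ℝ) ^ (1 - γt) := by
        rw [mul_assoc, ← Real.rpow_add hfac, sub_add_sub_cancel, div_eq_mul_inv,
          ← Real.rpow_neg hfac.le, neg_sub]

end
end
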